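/- arXiv:1310.3901 — 5 statements merged into one kernel-verified Lean document; each statement's English description precedes it below -/
import Mathlib

section
/- Let u₀ ≥ 0 and v₀ > 0, and set s = u₀ + v₀. Suppose g : ℝ → ℝ is differentiable, g(t) ≥ 0 for all t, and g(t)·exp(g(t)) = (u₀/v₀)·exp(u₀/v₀ - s²·t) for all t ∈ ℝ. Then the function v(t) := s / (1 + g(t)) satisfies v(0) = v₀ and v'(t) = (s - v(t))·v(t)² for all t ∈ ℝ. -/
/-! Differentiating the relation `g · exp g = (u₀/v₀) · exp (u₀/v₀ - s² t)` implicitly gives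
`g' = -s² g / (1 + g)`, and for `v = s / (1 + g)` this is exactly `v' = (s - v) v²`. At `t = 0` the
relation reads `g 0 · exp (g 0) = (u₀/v₀) · exp (u₀/v₀)`, and `x ↦ x · exp x` is injective on
`[0, ∞)`, so `g 0 = u₀/v₀` and `v 0 = v₀`. -/

open Real Set

lemma strictMonoOn_mul_exp : StrictMonoOn (fun x : ℝ => x * exp x) (Ici 0) :=
  fun _ ha _ _ hab => mul_lt_mul'' hab (exp_lt_exp.2 hab) ha (exp_pos _).le

lemma hasDerivAt_of_mul_exp_eq {g F : ℝ → ℝ} {F' t : ℝ} (hg : DifferentiableAt ℝ g t)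
    (hF : HasDerivAt F F' t) (hgF : ∀ t, g t * exp (g t) = F t) (hg₁ : 1 + g t ≠ 0) :
    HasDerivAt g (F' / ((1 + g t) * exp (g t))) t := by
  have hgF' : HasDerivAt F (deriv g t * ((1 + g t) * exp (g t))) t := by
    rw [← funext hgF]
    exact (hg.hasDerivAt.mul hg.hasDerivAt.exp).congr_deriv (by ring)
  rw [hF.unique hgF', mul_div_cancel_right₀ _ (mul_ne_zero hg₁ (exp_ne_zero _))]
  exact hg.hasDerivAt

lemma hasDerivAt_of_mul_exp_eq_mul_exp {g : ℝ → ℝ} {c a k t : ℝ} (hg : DifferentiableAt ℝ g t)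
    (hgF : ∀ t, g t * exp (g t) = c * exp (a - k * t)) (hg₁ : 1 + g t ≠ 0) :
    HasDerivAt g (-k * g t / (1 + g t)) t := by
  have hF : HasDerivAt (fun t => c * exp (a - k * t)) (-k * (g t * exp (g t))) t := by
    rw [hgF]
    exact ((((hasDerivAt_id t).const_mul k).const_sub a).exp.const_mul c).congr_deriv
      (by simp only [id, mul_one]; ring)
  convert hasDerivAt_of_mul_exp_eq hg hF hgF hg₁ using 1
  field_simp

lemma hasDerivAt_div_one_add {g : ℝ → ℝ} {s t : ℝ}
    (hg : HasDerivAt g (-s ^ 2 * g t / (1 + g t)) t) (hg₁ : 1 + g t ≠ 0) :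
    HasDerivAt (fun t => s / (1 + g t)) ((s - s / (1 + g t)) * (s / (1 + g t)) ^ 2) t :=
  ((hasDerivAt_const t s).div (hg.const_add 1) hg₁).congr_deriv (by field_simp; ring)

/-- If `g(t)` satisfies the defining relation of the Lambert W value
`W₀[(u₀/v₀) exp(u₀/v₀ - s² t)]` with `s = u₀ + v₀`, then
`v(t) = s / (1 + g(t))` satisfies `v(0) = v₀` and solves the decoupled
Gray-Scott reaction ODE `v' = (s - v) v²`. -/
theorem lambertW_formula_solves_reaction_ODE
    (u₀ v₀ : ℝ) (hu₀ : 0 ≤ u₀) (hv₀ : 0 < v₀) (s : ℝ) (hs : s = u₀ + v₀)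
    (g : ℝ → ℝ) (hg : Differentiable ℝ g) (hgnn : ∀ t : ℝ, 0 ≤ g t)
    (hgW : ∀ t : ℝ, g t * Real.exp (g t)
        = (u₀ / v₀) * Real.exp (u₀ / v₀ - s ^ 2 * t)) :
    (fun t : ℝ => s / (1 + g t)) 0 = v₀ ∧
    ∀ t : ℝ, deriv (fun t : ℝ => s / (1 + g t)) t
        = (s - s / (1 + g t)) * (s / (1 + g t)) ^ 2 := by
  have hg₁ (t : ℝ) : 1 + g t ≠ 0 := by linarith [hgnn t]
  refine ⟨?_, fun t => ?_⟩
  · have hg0 : g 0 = u₀ / v₀ :=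
      strictMonoOn_mul_exp.injOn (hgnn 0) (div_nonneg hu₀ hv₀.le)
        (by simpa using hgW 0)
    simp only [hg0, hs]
    field_simp
    ring
  · exact (hasDerivAt_div_one_add (hasDerivAt_of_mul_exp_eq_mul_exp (hg t) hgW (hg₁ t))
      (hg₁ t)).deriv
end

section
/- Let u₀ > 0 and v₀ > 0, and set s = u₀ + v₀. Then there exists a differentiable function g : ℝ → ℝ with g(t) > 0 and g(t)·exp(g(t)) = (u₀/v₀)·exp(u₀/v₀ - s²·t) for all t ∈ ℝ, and the function v(t) := s / (1 + g(t)) is differentiable, satisfies v(0) = v₀, and solves v'(t) = (s - v(t))·v(t)² for all t ∈ ℝ. -/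
/-!
Write `c = u₀ / v₀`. Substituting `g = exp w` turns `g exp g = exp y` into `w + exp w = y`, and
`w ↦ w + exp w` is a strictly increasing bijection of `ℝ` with positive derivative, so its inverse
`logLambert` is differentiable everywhere and `g t = exp (logLambert (log c + c - s² t))` is the
required positive branch. Differentiating `g exp g = c exp (c - s² t)` gives
`g' = -s² g / (1 + g)`, and this is exactly the equation that makes `v = s / (1 + g)` satisfy
`v' = (s - v) v²`. At `t = 0` the equation `g exp g = c exp c` forces `g 0 = c`, hence
`v 0 = s / (1 + u₀ / v₀) = v₀`.
-/

open Real Filter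

noncomputable section

def addExpOrderIso : ℝ ≃o ℝ :=
  StrictMono.orderIsoOfSurjective (fun w => w + exp w)
    (fun _ _ h => add_lt_add h (exp_lt_exp.2 h))
    ((continuous_id.add continuous_exp).surjective
      (tendsto_id.atTop_add_atTop tendsto_exp_atTop) (tendsto_id.atBot_add tendsto_exp_atBot))

/-- `logLambert y = log (W₀ (exp y))`. -/
def logLambert : ℝ → ℝ := addExpOrderIso.symm

lemma logLambert_add_exp (y : ℝ) : logLambert y + exp (logLambert y) = y :=
  addExpOrderIso.apply_symm_apply y

lemma logLambert_add_exp_self (w : ℝ) : logLambert (w + exp w) = w :=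
  addExpOrderIso.symm_apply_apply w

lemma hasDerivAt_logLambert (y : ℝ) :
    HasDerivAt logLambert (1 + exp (logLambert y))⁻¹ y :=
  HasDerivAt.of_local_left_inverse
    addExpOrderIso.toHomeomorph.symm.continuous.continuousAt
    ((hasDerivAt_id _).add (hasDerivAt_exp _)) (by positivity)
    (Eventually.of_forall logLambert_add_exp)

/-- `lambertWExp y = W₀ (exp y)`. -/
def lambertWExp (y : ℝ) : ℝ := exp (logLambert y)

lemma lambertWExp_pos (y : ℝ) : 0 < lambertWExp y := exp_pos _

lemma lambertWExp_mul_exp (y : ℝ) : lambertWExp y * exp (lambertWExp y) = exp y := by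
  rw [lambertWExp, ← exp_add, logLambert_add_exp]

lemma lambertWExp_log_add_self {c : ℝ} (hc : 0 < c) : lambertWExp (log c + c) = c := by
  have h := logLambert_add_exp_self (log c)
  rw [exp_log hc] at h
  rw [lambertWExp, h, exp_log hc]

lemma hasDerivAt_lambertWExp (y : ℝ) :
    HasDerivAt lambertWExp (lambertWExp y / (1 + lambertWExp y)) y := by
  rw [div_eq_mul_inv]
  exact (hasDerivAt_logLambert y).exp

end

lemma hasDerivAt_div_one_add_of_hasDerivAt {g : ℝ → ℝ} {s t : ℝ}
    (hg : HasDerivAt g (-s ^ 2 * g t / (1 + g t)) t) (hden : 1 + g t ≠ 0) :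
    HasDerivAt (fun t => s / (1 + g t)) ((s - s / (1 + g t)) * (s / (1 + g t)) ^ 2) t := by
  refine ((hasDerivAt_const t s).fun_div (hg.const_add 1) hden).congr_deriv ?_
  field_simp
  ring

/-- For `u₀, v₀ > 0` and `s = u₀ + v₀`, there exists a differentiable positive
function `g` with `g(t) exp(g(t)) = (u₀/v₀) exp(u₀/v₀ - s² t)` (namely, the
Lambert W value `W₀[(u₀/v₀) exp(u₀/v₀ - s² t)]`), and then
`v(t) = s / (1 + g(t))` is differentiable, satisfies `v(0) = v₀`, and solves
the decoupled Gray-Scott reaction ODE `v' = (s - v) v²`. -/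
theorem lambertW_solution_exists
    (u₀ v₀ : ℝ) (hu₀ : 0 < u₀) (hv₀ : 0 < v₀) (s : ℝ) (hs : s = u₀ + v₀) :
    ∃ g : ℝ → ℝ, Differentiable ℝ g ∧ (∀ t : ℝ, 0 < g t) ∧
      (∀ t : ℝ, g t * Real.exp (g t)
          = (u₀ / v₀) * Real.exp (u₀ / v₀ - s ^ 2 * t)) ∧
      Differentiable ℝ (fun t : ℝ => s / (1 + g t)) ∧
      (fun t : ℝ => s / (1 + g t)) 0 = v₀ ∧
      (∀ t : ℝ, deriv (fun t : ℝ => s / (1 + g t)) t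
          = (s - s / (1 + g t)) * (s / (1 + g t)) ^ 2) := by
  set c := u₀ / v₀
  have hc : 0 < c := div_pos hu₀ hv₀
  set g : ℝ → ℝ := fun t => lambertWExp (log c + c - s ^ 2 * t)
  have hg : ∀ t, HasDerivAt g (-s ^ 2 * g t / (1 + g t)) t := fun t => by
    refine ((hasDerivAt_lambertWExp _).comp t
      (((hasDerivAt_id t).const_mul (s ^ 2)).const_sub (log c + c))).congr_deriv ?_
    simp only [g, id]
    ring
  have hden : ∀ t, 1 + g t ≠ 0 := fun t => (add_pos one_pos (lambertWExp_pos _)).ne'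
  have hv := fun t => hasDerivAt_div_one_add_of_hasDerivAt (s := s) (hg t) (hden t)
  refine ⟨g, fun t => (hg t).differentiableAt, fun t => lambertWExp_pos _, fun t => ?_,
    fun t => (hv t).differentiableAt, ?_, fun t => (hv t).deriv⟩
  · rw [lambertWExp_mul_exp, add_sub_assoc, exp_add, exp_log hc]
  · have hg0 : g 0 = c := by
      simpa only [g, mul_zero, sub_zero] using lambertWExp_log_add_self hc
    change s / (1 + g 0) = v₀
    rw [hg0, hs]
    simp only [c]
    field_simp
    ring
end

section
/- Let D > 0, α > 0, and let u : ℝ × ℝ → ℂ be such that for each t the map x ↦ u(t,x) is 2π-periodic and twice continuously differentiable, for each x the map t ↦ u(t,x) is continuously differentiable, ∂u/∂t and ∂²u/∂x² are jointly continuous, and u satisfies ∂u/∂t = D·∂²u/∂x² + α·(1 - u) on ℝ × ℝ. Let a_k = α if k = 0 and a_k = 0 otherwise. Then for every k ∈ ℤ and t ∈ ℝ, the k-th Fourier coefficient ĉ_k(t) of u(t,·) on the circle of circumference 2π satisfies ĉ_k(t) = (ĉ_k(0) - a_k/(α + D·k²))·exp(-(α + D·k²)·t) + a_k/(α + D·k²).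 -/
/-!
Multiplying by `exp (-i k x)` and integrating over a period turns the equation into an ODE for
each Fourier coefficient: differentiation under the integral sign handles `∂ₜ`, two periodic
integrations by parts turn `∂ₓ²` into multiplication by `-k²`, and the constant `α` only
contributes to the mode `k = 0`. The coefficient `c` thus solves `c' = -(α + D k²) c + a_k`,
whose solutions are exactly the stated ones since `(c - a_k / (α + D k²)) exp ((α + D k²) t)`
is constant.
-/

open MeasureTheory intervalIntegral

/-- The `k`-th Fourier coefficient of a `2π`-periodic function `f : ℝ → ℂ`:
`(1/2π) ∫_{-π}^{π} f(x) exp(-i k x) dx`. -/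
noncomputable def fourierCoeff2pi (f : ℝ → ℂ) (k : ℤ) : ℂ :=
  (1 / (2 * (Real.pi : ℂ))) *
    ∫ x in (-Real.pi : ℝ)..Real.pi, f x * Complex.exp (-Complex.I * (k : ℂ) * (x : ℂ))

open Complex Function

open scoped Interval

noncomputable def fourierMode (k : ℤ) (x : ℝ) : ℂ := exp (-I * k * x)

lemma fourierCoeff2pi_eq_integral_fourierMode (f : ℝ → ℂ) (k : ℤ) :
    fourierCoeff2pi f k
      = 1 / (2 * (Real.pi : ℂ)) * ∫ x in -Real.pi..Real.pi, f x * fourierMode k x :=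
  rfl

lemma continuous_fourierMode (k : ℤ) : Continuous (fourierMode k) := by
  unfold fourierMode; fun_prop

lemma hasDerivAt_fourierMode (k : ℤ) (x : ℝ) :
    HasDerivAt (fourierMode k) (-I * k * fourierMode k x) x := by
  have h := ((hasDerivAt_id (x : ℂ)).const_mul (-I * k)).comp_ofReal.cexp
  convert h using 1
  · ext; simp [fourierMode]
  · simp [fourierMode]; ring

lemma norm_fourierMode (k : ℤ) (x : ℝ) : ‖fourierMode k x‖ = 1 := by
  rw [fourierMode, show -I * k * x = ((-(k * x) : ℝ) : ℂ) * I by push_cast; ring,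
    norm_exp_ofReal_mul_I]

lemma fourierMode_periodic (k : ℤ) : Periodic (fourierMode k) (2 * Real.pi) := by
  intro x
  rw [fourierMode, fourierMode, ofReal_add, mul_add, exp_add,
    show -I * k * ((2 * Real.pi : ℝ) : ℂ) = (-k : ℤ) * (2 * Real.pi * I) by push_cast; ring,
    exp_int_mul_two_pi_mul_I, mul_one]

lemma Function.Periodic.apply_pi_eq {β : Type*} {g : ℝ → β} (hg : Periodic g (2 * Real.pi)) :
    g Real.pi = g (-Real.pi) := by
  simpa [two_mul] using hg.sub_eq' (x := Real.pi)

lemma Function.Periodic.deriv {𝕜 F : Type*} [NontriviallyNormedField 𝕜] [NormedAddCommGroup F]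
    [NormedSpace 𝕜 F] {g : 𝕜 → F} {c : 𝕜} (hg : Periodic g c) : Periodic (deriv g) c := by
  intro x
  rw [← deriv_comp_add_const, show (fun y => g (y + c)) = g from funext hg]

lemma integral_fourierMode (k : ℤ) :
    ∫ x in -Real.pi..Real.pi, fourierMode k x = if k = 0 then 2 * (Real.pi : ℂ) else 0 := by
  split_ifs with hk
  · simp [hk, fourierMode]; ring
  · have hc : -I * k ≠ 0 := by simp [hk, I_ne_zero]
    have hprim : ∀ x ∈ Set.uIcc (-Real.pi) Real.pi,
        HasDerivAt (fun y => (-I * k)⁻¹ * fourierMode k y) (fourierMode k x) x := fun x _ => by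
      have h := (hasDerivAt_fourierMode k x).const_mul (-I * k)⁻¹
      rwa [inv_mul_cancel_left₀ hc] at h
    rw [integral_eq_sub_of_hasDerivAt hprim ((continuous_fourierMode k).intervalIntegrable _ _),
      (fourierMode_periodic k).apply_pi_eq, sub_self]

lemma fourierCoeff2pi_const (c : ℂ) (k : ℤ) :
    fourierCoeff2pi (fun _ => c) k = if k = 0 then c else 0 := by
  rw [fourierCoeff2pi_eq_integral_fourierMode, intervalIntegral.integral_const_mul,
    integral_fourierMode]
  split_ifs
  · field_simp [Real.pi_ne_zero]
  · simp

section Linearity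

variable {f g : ℝ → ℂ}

lemma fourierCoeff2pi_const_mul (c : ℂ) (k : ℤ) :
    fourierCoeff2pi (fun x => c * f x) k = c * fourierCoeff2pi f k := by
  simp only [fourierCoeff2pi_eq_integral_fourierMode, mul_assoc,
    intervalIntegral.integral_const_mul]
  ring

lemma IntervalIntegrable.mul_fourierMode (hf : IntervalIntegrable f volume (-Real.pi) Real.pi)
    (k : ℤ) : IntervalIntegrable (fun x => f x * fourierMode k x) volume (-Real.pi) Real.pi :=
  hf.mul_continuousOn (continuous_fourierMode k).continuousOn

lemma fourierCoeff2pi_add (hf : IntervalIntegrable f volume (-Real.pi) Real.pi)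
    (hg : IntervalIntegrable g volume (-Real.pi) Real.pi) (k : ℤ) :
    fourierCoeff2pi (fun x => f x + g x) k = fourierCoeff2pi f k + fourierCoeff2pi g k := by
  simp only [fourierCoeff2pi_eq_integral_fourierMode, add_mul,
    integral_add (hf.mul_fourierMode k) (hg.mul_fourierMode k)]
  ring

lemma fourierCoeff2pi_sub (hf : IntervalIntegrable f volume (-Real.pi) Real.pi)
    (hg : IntervalIntegrable g volume (-Real.pi) Real.pi) (k : ℤ) :
    fourierCoeff2pi (fun x => f x - g x) k = fourierCoeff2pi f k - fourierCoeff2pi g k := by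
  simp only [fourierCoeff2pi_eq_integral_fourierMode, sub_mul,
    integral_sub (hf.mul_fourierMode k) (hg.mul_fourierMode k)]
  ring

end Linearity

lemma fourierCoeff2pi_deriv {g : ℝ → ℂ} (hg : ContDiff ℝ 1 g) (hper : Periodic g (2 * Real.pi))
    (k : ℤ) : fourierCoeff2pi (deriv g) k = I * k * fourierCoeff2pi g k := by
  have hparts := integral_mul_deriv_eq_deriv_mul (a := -Real.pi) (b := Real.pi)
    (fun x _ => hasDerivAt_fourierMode k x)
    (fun x _ => (hg.differentiable one_ne_zero x).hasDerivAt)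
    ((continuous_const.mul (continuous_fourierMode k)).intervalIntegrable _ _)
    ((hg.continuous_deriv le_rfl).intervalIntegrable _ _)
  rw [(fourierMode_periodic k).apply_pi_eq, hper.apply_pi_eq, sub_self, zero_sub] at hparts
  simp only [fourierCoeff2pi_eq_integral_fourierMode, mul_comm (deriv g _), hparts]
  simp only [mul_comm (g _), mul_assoc, intervalIntegral.integral_const_mul]
  ring

lemma fourierCoeff2pi_deriv_deriv {f : ℝ → ℂ} (hf : ContDiff ℝ 2 f)
    (hper : Periodic f (2 * Real.pi)) (k : ℤ) :
    fourierCoeff2pi (deriv (deriv f)) k = -(k : ℂ) ^ 2 * fourierCoeff2pi f k := by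
  have hf' : ContDiff ℝ 1 (deriv f) := hf.deriv' (n := 1)
  rw [fourierCoeff2pi_deriv hf' hper.deriv, fourierCoeff2pi_deriv (hf.of_le one_le_two) hper]
  linear_combination (k : ℂ) ^ 2 * fourierCoeff2pi f k * I_sq

lemma fourierCoeff2pi_diffusion_relaxation {f : ℝ → ℂ} (hf : ContDiff ℝ 2 f)
    (hper : Periodic f (2 * Real.pi)) (D α : ℂ) (k : ℤ) :
    fourierCoeff2pi (fun x => D * deriv (deriv f) x + α * (1 - f x)) k
      = (if k = 0 then α else 0) - (α + D * (k : ℂ) ^ 2) * fourierCoeff2pi f k := by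
  have hint : ∀ {g : ℝ → ℂ}, Continuous g → IntervalIntegrable g volume (-Real.pi) Real.pi :=
    fun hg => hg.intervalIntegrable _ _
  have hf'' : Continuous (deriv (deriv f)) := by
    simpa [iteratedDeriv_succ] using hf.continuous_iteratedDeriv' 2
  rw [fourierCoeff2pi_add (hint (by fun_prop)) (hint (by fun_prop)),
    fourierCoeff2pi_const_mul, fourierCoeff2pi_const_mul,
    fourierCoeff2pi_sub (hint continuous_const) (hint hf.continuous),
    fourierCoeff2pi_const, fourierCoeff2pi_deriv_deriv hf hper]
  split_ifs <;> ring

lemma hasDerivAt_fourierCoeff2pi {u : ℝ × ℝ → ℂ} (hx : ∀ t, Continuous fun x => u (t, x))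
    (ht : ∀ x, Differentiable ℝ fun t => u (t, x))
    (hcont_t : Continuous fun p : ℝ × ℝ => deriv (fun s => u (s, p.2)) p.1) (k : ℤ) (t₀ : ℝ) :
    HasDerivAt (fun t => fourierCoeff2pi (fun x => u (t, x)) k)
      (fourierCoeff2pi (fun x => deriv (fun s => u (s, x)) t₀) k) t₀ := by
  obtain ⟨C, hC⟩ := ((isCompact_Icc (a := t₀ - 1) (b := t₀ + 1)).prod
    (isCompact_Icc (a := -Real.pi) (b := Real.pi))).exists_bound_of_continuousOn
    hcont_t.continuousOn
  have hbound : ∀ᵐ x, x ∈ Ι (-Real.pi) Real.pi → ∀ s ∈ Metric.ball t₀ 1,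
      ‖deriv (fun s => u (s, x)) s * fourierMode k x‖ ≤ C := by
    refine Filter.Eventually.of_forall fun x hxmem s hs => ?_
    rw [norm_mul, norm_fourierMode, mul_one]
    rw [Set.uIoc_of_le (by linarith [Real.pi_pos])] at hxmem
    rw [Metric.mem_ball, Real.dist_eq, abs_lt] at hs
    exact hC (s, x) ⟨⟨by linarith, by linarith⟩, hxmem.1.le, hxmem.2⟩
  have hdiff := hasDerivAt_integral_of_dominated_loc_of_deriv_le
    (F := fun t x => u (t, x) * fourierMode k x) (Metric.ball_mem_nhds t₀ one_pos)
    (.of_forall fun t => ((hx t).mul (continuous_fourierMode k)).aestronglyMeasurable)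
    (((hx t₀).mul (continuous_fourierMode k)).intervalIntegrable _ _)
    ((hcont_t.comp (Continuous.prodMk_right t₀)).mul
      (continuous_fourierMode k)).aestronglyMeasurable
    hbound intervalIntegrable_const
    (.of_forall fun x _ s _ => ((ht x s).hasDerivAt).mul_const (fourierMode k x))
  exact hdiff.2.const_mul _

lemma eq_of_hasDerivAt_neg_mul_add {c : ℝ → ℂ} {r b : ℂ} (hr : r ≠ 0)
    (hc : ∀ s, HasDerivAt c (-r * c s + b) s) (t : ℝ) :
    c t = (c 0 - b / r) * exp (-r * t) + b / r := by
  set g : ℝ → ℂ := fun s => (c s - b / r) * exp (r * s)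
  have hg : ∀ s, HasDerivAt g 0 s := fun s => by
    have hexp : HasDerivAt (fun s : ℝ => exp (r * s)) (exp (r * s) * r) s := by
      simpa using ((hasDerivAt_id (s : ℂ)).const_mul r).comp_ofReal.cexp
    refine (((hc s).sub_const (b / r)).mul hexp).congr_deriv ?_
    field_simp
    ring
  have hconst : g t = g 0 := is_const_of_deriv_eq_zero (fun s => (hg s).differentiableAt)
    (fun s => (hg s).deriv) t 0
  simp only [g, ofReal_zero, mul_zero, exp_zero, mul_one] at hconst
  rw [← hconst, mul_assoc, ← exp_add, neg_mul, add_neg_cancel, exp_zero, mul_one, sub_add_cancel]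

theorem grayScott_linear_substep_fourier_coeff_general
    (D α : ℝ) (hD : 0 < D) (hα : 0 < α) (u : ℝ × ℝ → ℂ)
    (hper : ∀ t x : ℝ, u (t, x + 2 * Real.pi) = u (t, x))
    (hx : ∀ t : ℝ, ContDiff ℝ 2 (fun x : ℝ => u (t, x)))
    (ht : ∀ x : ℝ, ContDiff ℝ 1 (fun t : ℝ => u (t, x)))
    (hcont_t : Continuous fun p : ℝ × ℝ => deriv (fun s : ℝ => u (s, p.2)) p.1)
    (hpde : ∀ t x : ℝ, deriv (fun s : ℝ => u (s, x)) t
        = (D : ℂ) * deriv (deriv (fun y : ℝ => u (t, y))) x + (α : ℂ) * (1 - u (t, x)))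
    (a : ℤ → ℂ) (ha : ∀ k : ℤ, a k = if k = 0 then (α : ℂ) else 0) :
    ∀ (k : ℤ) (t : ℝ),
      fourierCoeff2pi (fun x : ℝ => u (t, x)) k
        = (fourierCoeff2pi (fun x : ℝ => u (0, x)) k
              - a k / ((α : ℂ) + (D : ℂ) * (k : ℂ) ^ 2)) *
            Complex.exp (-((α : ℂ) + (D : ℂ) * (k : ℂ) ^ 2) * (t : ℂ))
          + a k / ((α : ℂ) + (D : ℂ) * (k : ℂ) ^ 2) := by
  intro k t
  have hrate : (α : ℂ) + D * (k : ℂ) ^ 2 ≠ 0 := by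
    exact_mod_cast (by positivity : 0 < α + D * (k : ℝ) ^ 2).ne'
  refine eq_of_hasDerivAt_neg_mul_add (c := fun s => fourierCoeff2pi (fun x => u (s, x)) k)
    hrate (fun s => ?_) t
  have hcoeff := hasDerivAt_fourierCoeff2pi (fun t => (hx t).continuous)
    (fun x => (ht x).differentiable one_ne_zero) hcont_t k s
  rwa [funext (hpde s), fourierCoeff2pi_diffusion_relaxation (hx s) (hper s), ← ha,
    sub_eq_neg_add, ← neg_mul] at hcoeff

/-- For a smooth `2π`-periodic solution of the linear Gray-Scott sub-step
`uₜ = D u_xx + α (1 - u)`, the `k`-th Fourier coefficient evolves as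
`ĉ_k(t) = (ĉ_k(0) - a_k/(α + D k²)) exp(-(α + D k²) t) + a_k/(α + D k²)`,
where `a_k` is the `k`-th Fourier coefficient of the constant function `α`. -/
theorem grayScott_linear_substep_fourier_coeff
    (D α : ℝ) (hD : 0 < D) (hα : 0 < α) (u : ℝ × ℝ → ℂ)
    (hper : ∀ t x : ℝ, u (t, x + 2 * Real.pi) = u (t, x))
    (hx : ∀ t : ℝ, ContDiff ℝ 2 (fun x : ℝ => u (t, x)))
    (ht : ∀ x : ℝ, ContDiff ℝ 1 (fun t : ℝ => u (t, x)))
    (hcont_t : Continuous fun p : ℝ × ℝ => deriv (fun s : ℝ => u (s, p.2)) p.1)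
    (hcont_xx : Continuous fun p : ℝ × ℝ =>
        deriv (deriv (fun y : ℝ => u (p.1, y))) p.2)
    (hpde : ∀ t x : ℝ, deriv (fun s : ℝ => u (s, x)) t
        = (D : ℂ) * deriv (deriv (fun y : ℝ => u (t, y))) x + (α : ℂ) * (1 - u (t, x)))
    (a : ℤ → ℂ) (ha : ∀ k : ℤ, a k = if k = 0 then (α : ℂ) else 0) :
    ∀ (k : ℤ) (t : ℝ),
      fourierCoeff2pi (fun x : ℝ => u (t, x)) k
        = (fourierCoeff2pi (fun x : ℝ => u (0, x)) k
              - a k / ((α : ℂ) + (D : ℂ) * (k : ℂ) ^ 2)) *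
            Complex.exp (-((α : ℂ) + (D : ℂ) * (k : ℂ) ^ 2) * (t : ℂ))
          + a k / ((α : ℂ) + (D : ℂ) * (k : ℂ) ^ 2) :=
  grayScott_linear_substep_fourier_coeff_general D α hD hα u hper hx ht hcont_t hpde a ha
end

section
/- Let 𝔸 be a complete normed algebra (Banach algebra) over ℝ with exponential exp, and let A, B ∈ 𝔸. Define f : ℝ → 𝔸 by f(t) = exp(t·B/2) · exp(t·A) · exp(t·B/2) - exp(t·(A+B)). Then f(0) = 0, f'(0) = 0, and f''(0) = 0; that is, Strang splitting agrees with the exact exponential flow to second order in t. -/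
open NormedSpace

/-!
Writing `e_X(t) = exp (t • X)`, every factor satisfies `e_X(0) = 1`, `e_X'(0) = X`,
`e_X''(0) = X²`. The Leibniz rule `(gh)'' = g''h + 2g'h' + gh''` then gives, with `C = B/2`,
first derivative `C + A + C = A + B` and second derivative
`(C² + 2CA + A²) + 2(C + A)C + C² = A² + AB + BA + B² = (A + B)²` for the Strang product
at `0`, which are exactly the first two derivatives of `e_{A+B}` at `0`.
-/

section SecondDerivs

variable {𝕜 𝔸 : Type*} [NontriviallyNormedField 𝕜] [NormedRing 𝔸] [NormedAlgebra 𝕜 𝔸]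

def HasSecondDerivs (f f' f'' : 𝕜 → 𝔸) : Prop :=
  ∀ t, HasDerivAt f (f' t) t ∧ HasDerivAt f' (f'' t) t

namespace HasSecondDerivs

variable {f f' f'' g g' g'' : 𝕜 → 𝔸}

theorem deriv_eq (hf : HasSecondDerivs f f' f'') : deriv f = f' :=
  funext fun t => (hf t).1.deriv

theorem deriv_deriv_eq (hf : HasSecondDerivs f f' f'') : deriv (deriv f) = f'' := by
  rw [hf.deriv_eq]
  exact funext fun t => (hf t).2.deriv

theorem mul (hf : HasSecondDerivs f f' f'') (hg : HasSecondDerivs g g' g'') :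
    HasSecondDerivs (fun t => f t * g t) (fun t => f' t * g t + f t * g' t)
      (fun t => f'' t * g t + 2 * (f' t * g' t) + f t * g'' t) :=
  fun t => ⟨(hf t).1.fun_mul (hg t).1,
    (((hf t).2.fun_mul (hg t).1).fun_add ((hf t).1.fun_mul (hg t).2)).congr_deriv
      (by noncomm_ring)⟩

theorem sub (hf : HasSecondDerivs f f' f'') (hg : HasSecondDerivs g g' g'') :
    HasSecondDerivs (fun t => f t - g t) (fun t => f' t - g' t) (fun t => f'' t - g'' t) :=
  fun t => ⟨(hf t).1.sub (hg t).1, (hf t).2.sub (hg t).2⟩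

end HasSecondDerivs

end SecondDerivs

theorem hasSecondDerivs_exp_smul {𝕜 𝔸 : Type*} [RCLike 𝕜] [NormedRing 𝔸] [NormedAlgebra 𝕜 𝔸]
    [CompleteSpace 𝔸] (X : 𝔸) :
    HasSecondDerivs (fun t : 𝕜 => exp (t • X)) (fun t => exp (t • X) * X)
      (fun t => exp (t • X) * X * X) :=
  fun t => ⟨hasDerivAt_exp_smul_const X t, (hasDerivAt_exp_smul_const X t).mul_const X⟩

/-- In a Banach algebra, the Strang splitting
`t ↦ exp(tB/2) exp(tA) exp(tB/2)` agrees with the exact exponential flow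
`t ↦ exp(t(A+B))` to second order in `t`: their difference `f` satisfies
`f(0) = 0`, `f'(0) = 0`, `f''(0) = 0`. -/
theorem strang_splitting_second_order
    {𝔸 : Type*} [NormedRing 𝔸] [NormedAlgebra ℝ 𝔸] [CompleteSpace 𝔸]
    (A B : 𝔸)
    (f : ℝ → 𝔸)
    (hf : ∀ t : ℝ, f t =
        exp ((t / 2) • B) * exp (t • A) * exp ((t / 2) • B)
          - exp (t • (A + B))) :
    f 0 = 0 ∧ deriv f 0 = 0 ∧ deriv (deriv f) 0 = 0 := by
  set C : 𝔸 := (2 : ℝ)⁻¹ • B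
  have hf_eq : f = fun t => exp (t • C) * exp (t • A) * exp (t • C) - exp (t • (A + B)) := by
    funext t
    rw [hf, smul_smul, div_eq_mul_inv]
  have hjet := (((hasSecondDerivs_exp_smul (𝕜 := ℝ) C).mul (hasSecondDerivs_exp_smul A)).mul
    (hasSecondDerivs_exp_smul C)).sub (hasSecondDerivs_exp_smul (A + B))
  rw [← hf_eq] at hjet
  refine ⟨by simp [hf_eq], ?_, ?_⟩
  · rw [hjet.deriv_eq]
    simp only [zero_smul, exp_zero, one_mul, mul_one, C]
    module
  · rw [hjet.deriv_deriv_eq]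
    simp only [zero_smul, exp_zero, one_mul, mul_one]
    simp only [C, two_mul, smul_mul_assoc, mul_smul_comm, mul_add, add_mul, smul_smul]
    module
end

section
/- Let 𝔸 be a complete normed algebra (Banach algebra) over ℝ with exponential exp, and let A, B ∈ 𝔸. Set E = (B·A² + A²·B + B·A·B)/2 - (B²·A + A·B²)/4 - A·B·A. Then there exists a constant C > 0 such that for all t ∈ ℝ with |t| ≤ 1, ‖exp(t·B/2)·exp(t·A)·exp(t·B/2) - exp(t·(A+B)) - (t³/6)·E‖ ≤ C·|t|⁴. -/
/-!
Replace each exponential `exp (t • X)` by its cubic Taylor polynomial: by the Taylor remainder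
of `exp` the error is `O(t⁴)`, and since all factors stay bounded, so is the error made in the
product `exp (t • B/2) * exp (t • A) * exp (t • B/2)`. The product of the Taylor polynomials
expands into terms `t^(i+j+k) • (B/2)^i A^j (B/2)^k / (i! j! k!)`; those of degree at least `4`
are `O(t⁴)`, and those of degree at most `3` add up to the cubic Taylor polynomial of
`exp (t • (A + B))` plus `(t³/6) • E`.

All `O(·)` statements are taken along the principal filter of `[-1, 1]`, so they are uniform
bounds on `[-1, 1]` and a single constant comes out at the end.
-/

open NormedSpace Asymptotics Filter Finset Set
open scoped Nat

theorem Finset.sum_mul_sum_mul_sum {ι κ μ R : Type*} [NonUnitalNonAssocSemiring R]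
    (s : Finset ι) (t : Finset κ) (u : Finset μ) (f : ι → R) (g : κ → R) (h : μ → R) :
    (∑ i ∈ s, f i) * (∑ j ∈ t, g j) * (∑ k ∈ u, h k)
      = ∑ x ∈ s ×ˢ t ×ˢ u, f x.1 * g x.2.1 * h x.2.2 := by
  rw [sum_mul_sum, sum_product]
  simp_rw [sum_product, sum_mul, mul_sum]

theorem Asymptotics.IsBigO.mul_sub_mul {α R : Type*} [SeminormedRing R] {l : Filter α}
    {x₁ x₂ y₁ y₂ : α → R} {g : α → ℝ} (h₁ : (fun a => x₁ a - y₁ a) =O[l] g)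
    (h₂ : (fun a => x₂ a - y₂ a) =O[l] g) (hx₂ : x₂ =O[l] fun _ => (1 : ℝ))
    (hy₁ : y₁ =O[l] fun _ => (1 : ℝ)) :
    (fun a => x₁ a * x₂ a - y₁ a * y₂ a) =O[l] g := by
  have key : ∀ a, x₁ a * x₂ a - y₁ a * y₂ a = (x₁ a - y₁ a) * x₂ a + y₁ a * (x₂ a - y₂ a) :=
    fun a => by noncomm_ring
  have h₁' := h₁.mul hx₂
  have h₂' := hy₁.mul h₂
  simp only [mul_one, one_mul] at h₁' h₂'
  simpa only [key] using h₁'.add h₂'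

theorem isBigO_pow_pow_Icc {m n : ℕ} (h : n ≤ m) :
    (fun t : ℝ => t ^ m) =O[𝓟 (Icc (-1) 1)] fun t => t ^ n := by
  refine isBigO_principal.2 ⟨1, fun t ht => ?_⟩
  simp only [norm_pow, Real.norm_eq_abs, one_mul]
  exact pow_le_pow_of_le_one (abs_nonneg t) (abs_le.2 ht) h

section

variable {𝔸 : Type*} [NormedRing 𝔸] [NormedAlgebra ℝ 𝔸]

theorem isBigO_expSeries_smul (X : 𝔸) (k : ℕ) (l : Filter ℝ) :
    (fun t : ℝ => expSeries ℝ 𝔸 k fun _ => t • X) =O[l] fun t => t ^ k := by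
  refine IsBigO.of_bound ‖((k ! : ℝ))⁻¹ • X ^ k‖ (Eventually.of_forall fun t => ?_)
  rw [expSeries_apply_eq, smul_pow, smul_comm, norm_smul, mul_comm]

theorem isBigO_partialSum_smul_one (X : 𝔸) (n : ℕ) :
    (fun t : ℝ => (expSeries ℝ 𝔸).partialSum n (t • X)) =O[𝓟 (Icc (-1) 1)] fun _ => (1 : ℝ) :=
  (((expSeries ℝ 𝔸).partialSum_continuous n).comp (by fun_prop)).continuousOn.isBigO_principal
    isCompact_Icc (by simp)

theorem isBigO_exp_smul_sub_partialSum [CompleteSpace 𝔸] (X : 𝔸) (n : ℕ) :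
    (fun t : ℝ => exp (t • X) - (expSeries ℝ 𝔸).partialSum n (t • X))
      =O[𝓟 (Icc (-1) 1)] fun t => t ^ n := by
  obtain ⟨a, ha, C, hC, hgeom⟩ :=
    (exp_hasFPowerSeriesOnBall (𝕂 := ℝ) (𝔸 := 𝔸)).uniform_geometric_approx'
      (r' := ‖X‖₊ + 1) ENNReal.coe_lt_top
  refine isBigO_principal.2 ⟨C, fun t ht => ?_⟩
  have htX : ‖t • X‖ ≤ |t| * ‖X‖ := by rw [norm_smul, Real.norm_eq_abs]
  have hr : ((‖X‖₊ + 1 : NNReal) : ℝ) = ‖X‖ + 1 := by push_cast; rfl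
  have hball : t • X ∈ Metric.ball (0 : 𝔸) (‖X‖₊ + 1 : NNReal) := by
    rw [mem_ball_zero_iff, hr]
    nlinarith [abs_le.2 ht, norm_nonneg X, abs_nonneg t]
  have hratio : a * (‖t • X‖ / (‖X‖₊ + 1 : NNReal)) ≤ |t| := by
    have : ‖t • X‖ / (‖X‖ + 1) ≤ |t| := by
      rw [div_le_iff₀ (by positivity)]
      nlinarith [abs_nonneg t]
    rw [hr]
    nlinarith [ha.2, div_nonneg (norm_nonneg (t • X)) (by positivity : (0 : ℝ) ≤ ‖X‖ + 1)]
  simpa only [zero_add] using (hgeom _ hball n).trans (mul_le_mul_of_nonneg_left (by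
    rw [norm_pow, Real.norm_eq_abs]
    exact pow_le_pow_left₀ (mul_nonneg ha.1.le (by positivity)) hratio n) hC.le)

theorem isBigO_exp_smul_one [CompleteSpace 𝔸] (X : 𝔸) :
    (fun t : ℝ => exp (t • X)) =O[𝓟 (Icc (-1) 1)] fun _ => (1 : ℝ) := by
  simpa [FormalMultilinearSeries.partialSum] using isBigO_exp_smul_sub_partialSum X 0

theorem isBigO_exp_mul_exp_mul_exp_sub_partialSum [CompleteSpace 𝔸] (X Y : 𝔸) (n : ℕ) :
    (fun t : ℝ => exp (t • X) * exp (t • Y) * exp (t • X)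
        - (expSeries ℝ 𝔸).partialSum n (t • X) * (expSeries ℝ 𝔸).partialSum n (t • Y)
          * (expSeries ℝ 𝔸).partialSum n (t • X))
      =O[𝓟 (Icc (-1) 1)] fun t => t ^ n := by
  have hXY := (isBigO_exp_smul_sub_partialSum X n).mul_sub_mul
    (isBigO_exp_smul_sub_partialSum Y n) (isBigO_exp_smul_one Y) (isBigO_partialSum_smul_one X n)
  refine hXY.mul_sub_mul (isBigO_exp_smul_sub_partialSum X n) (isBigO_exp_smul_one X) ?_
  simpa only [mul_one] using (isBigO_partialSum_smul_one X n).mul (isBigO_partialSum_smul_one Y n)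

noncomputable def strangErrorCoeff (A B : 𝔸) : 𝔸 :=
  (2 : ℝ)⁻¹ • (B * A ^ 2 + A ^ 2 * B + B * A * B) - (4 : ℝ)⁻¹ • (B ^ 2 * A + A * B ^ 2)
    - A * B * A

theorem strang_taylor_low_degree (A B : 𝔸) (t : ℝ) :
    ∑ x ∈ range 4 ×ˢ range 4 ×ˢ range 4 with x.1 + x.2.1 + x.2.2 < 4,
      (expSeries ℝ 𝔸 x.1 fun _ => t • (2⁻¹ : ℝ) • B) * (expSeries ℝ 𝔸 x.2.1 fun _ => t • A)
        * (expSeries ℝ 𝔸 x.2.2 fun _ => t • (2⁻¹ : ℝ) • B)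
      = (expSeries ℝ 𝔸).partialSum 4 (t • (A + B)) + (t ^ 3 / 6) • strangErrorCoeff A B := by
  simp only [sum_filter, sum_product, sum_range_succ, sum_range_zero,
    FormalMultilinearSeries.partialSum, expSeries_apply_eq, strangErrorCoeff, Nat.factorial,
    Nat.succ_eq_add_one, Nat.reduceAdd, Nat.reduceMul, Nat.reduceLT, Nat.lt_add_one, Nat.ofNat_pos,
    Nat.one_lt_ofNat, lt_self_iff_false, ↓reduceIte, add_zero, zero_add, Nat.cast_one,
    Nat.cast_ofNat, inv_one, pow_zero, pow_succ, one_smul, one_mul, mul_one, smul_smul, smul_add,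
    mul_add, add_mul, mul_assoc, Algebra.mul_smul_comm, Algebra.smul_mul_assoc]
  match_scalars <;> ring

theorem isBigO_strang_partialSum (A B : 𝔸) :
    (fun t : ℝ => (expSeries ℝ 𝔸).partialSum 4 (t • (2⁻¹ : ℝ) • B)
        * (expSeries ℝ 𝔸).partialSum 4 (t • A) * (expSeries ℝ 𝔸).partialSum 4 (t • (2⁻¹ : ℝ) • B)
        - (expSeries ℝ 𝔸).partialSum 4 (t • (A + B)) - (t ^ 3 / 6) • strangErrorCoeff A B)
      =O[𝓟 (Icc (-1) 1)] fun t => t ^ 4 := by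
  suffices high : (fun t : ℝ => ∑ x ∈ range 4 ×ˢ range 4 ×ˢ range 4 with ¬x.1 + x.2.1 + x.2.2 < 4,
      (expSeries ℝ 𝔸 x.1 fun _ => t • (2⁻¹ : ℝ) • B) * (expSeries ℝ 𝔸 x.2.1 fun _ => t • A)
        * (expSeries ℝ 𝔸 x.2.2 fun _ => t • (2⁻¹ : ℝ) • B)) =O[𝓟 (Icc (-1) 1)] fun t => t ^ 4 by
    refine high.congr_left fun t => ?_
    rw [FormalMultilinearSeries.partialSum, FormalMultilinearSeries.partialSum,
      sum_mul_sum_mul_sum, ← sum_filter_add_sum_filter_not (range 4 ×ˢ range 4 ×ˢ range 4) (fun x => x.1 + x.2.1 + x.2.2 < 4),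
      strang_taylor_low_degree]
    abel
  refine IsBigO.fun_sum fun x hx => ?_
  have hdeg : 4 ≤ x.1 + x.2.1 + x.2.2 := not_lt.1 (mem_filter.1 hx).2
  have hterm := ((isBigO_expSeries_smul ((2⁻¹ : ℝ) • B) x.1 (𝓟 (Icc (-1) 1))).mul
    (isBigO_expSeries_smul A x.2.1 _)).mul (isBigO_expSeries_smul ((2⁻¹ : ℝ) • B) x.2.2 _)
  simp only [← pow_add] at hterm
  exact hterm.trans (isBigO_pow_pow_Icc hdeg)

end

/-- In a Banach algebra, the one-step Strang splitting error equals
`(t³/6)·E + O(t⁴)`, where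
`E = (BA² + A²B + BAB)/2 - (B²A + AB²)/4 - ABA`: there is `C > 0` such that
for all `|t| ≤ 1` the remainder is bounded by `C |t|⁴`. -/
theorem strang_splitting_error_bound
    {𝔸 : Type*} [NormedRing 𝔸] [NormedAlgebra ℝ 𝔸] [CompleteSpace 𝔸]
    (A B : 𝔸)
    (E : 𝔸)
    (hE : E = (2 : ℝ)⁻¹ • (B * A ^ 2 + A ^ 2 * B + B * A * B)
        - (4 : ℝ)⁻¹ • (B ^ 2 * A + A * B ^ 2)
        - A * B * A) :
    ∃ C : ℝ, 0 < C ∧ ∀ t : ℝ, |t| ≤ 1 →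
      ‖exp ((t / 2) • B) * exp (t • A) * exp ((t / 2) • B)
          - exp (t • (A + B)) - (t ^ 3 / 6) • E‖ ≤ C * |t| ^ 4 := by
  obtain rfl : E = strangErrorCoeff A B := hE
  have half : ∀ t : ℝ, (t / 2) • B = t • (2⁻¹ : ℝ) • B := fun t => by
    rw [smul_smul, div_eq_mul_inv]
  have htotal : (fun t : ℝ => exp (t • (2⁻¹ : ℝ) • B) * exp (t • A) * exp (t • (2⁻¹ : ℝ) • B)
      - exp (t • (A + B)) - (t ^ 3 / 6) • strangErrorCoeff A B) =O[𝓟 (Icc (-1) 1)] fun t => t ^ 4 :=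
    (((isBigO_exp_mul_exp_mul_exp_sub_partialSum _ A 4).add (isBigO_strang_partialSum A B)).sub
      (isBigO_exp_smul_sub_partialSum (A + B) 4)).congr_left fun t => by abel
  obtain ⟨C, hC, hbound⟩ := htotal.exists_pos
  refine ⟨C, hC, fun t ht => ?_⟩
  simpa only [half, norm_pow, Real.norm_eq_abs] using isBigOWith_principal.1 hbound t (abs_le.1 ht)
end
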